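/- arXiv:1602.03164 — 6 statements merged into one kernel-verified Lean document; each statement's English description precedes it below -/
import Mathlib

section
/- Every central extension of a dihedral group D_{2n} by a cyclic group Z/mZ, given by the presentation ⟨X, Y, Z | X^n = Z^α, Y^2 = Z^β, YX = X^{n-1}YZ^γ, YZ = ZY, XZ = ZX, Z^m = 1⟩, is isomorphic to one such group where β = 0 or β = 1. -/
/-! Since `Z` is central, the substitution `Y ↦ Y Z ^ k` preserves every defining relation of
`G(α, β, γ)` except `Y ^ 2 = Z ^ β`, which becomes `Y ^ 2 = Z ^ (β + 2 k)`; the substitution with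
`-k` undoes it. Hence `G(α, β, γ) ≅ G(α, β', γ)` whenever `β ≡ β' (mod 2)`. -/

/-- Relations for the central extension of the dihedral group `D_{2n}` by `ℤ/mℤ`
with parameters `(α, β, γ)`: generators `X = 0`, `Y = 1`, `Z = 2`. -/
def grels (n m : ℕ) (α β γ : ℤ) : Set (FreeGroup (Fin 3)) :=
  { FreeGroup.of (0 : Fin 3) ^ n * (FreeGroup.of (2 : Fin 3) ^ α)⁻¹,
    FreeGroup.of (1 : Fin 3) ^ 2 * (FreeGroup.of (2 : Fin 3) ^ β)⁻¹,
    FreeGroup.of (1 : Fin 3) * FreeGroup.of (0 : Fin 3) *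
      (FreeGroup.of (0 : Fin 3) ^ (n - 1) * FreeGroup.of (1 : Fin 3) *
        FreeGroup.of (2 : Fin 3) ^ γ)⁻¹,
    FreeGroup.of (1 : Fin 3) * FreeGroup.of (2 : Fin 3) *
      (FreeGroup.of (2 : Fin 3) * FreeGroup.of (1 : Fin 3))⁻¹,
    FreeGroup.of (0 : Fin 3) * FreeGroup.of (2 : Fin 3) *
      (FreeGroup.of (2 : Fin 3) * FreeGroup.of (0 : Fin 3))⁻¹,
    FreeGroup.of (2 : Fin 3) ^ m }

/-- The central extension `G(α, β, γ)` of `D_{2n}` by `ℤ/mℤ`. -/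
abbrev GG (n m : ℕ) (α β γ : ℤ) : Type := PresentedGroup (grels n m α β γ)

def gX (n m : ℕ) (α β γ : ℤ) : GG n m α β γ := PresentedGroup.of 0
def gY (n m : ℕ) (α β γ : ℤ) : GG n m α β γ := PresentedGroup.of 1
def gZ (n m : ℕ) (α β γ : ℤ) : GG n m α β γ := PresentedGroup.of 2

section Relations

variable {n m : ℕ} {α β γ : ℤ}

theorem gX_pow_eq : gX n m α β γ ^ n = gZ n m α β γ ^ α := by
  have h := PresentedGroup.mk_eq_mk_of_mul_inv_mem
    (rels := grels n m α β γ) (x := .of 0 ^ n) (y := .of 2 ^ α) (by simp [grels])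
  simp only [map_pow, map_zpow] at h
  exact h

theorem gY_sq : gY n m α β γ ^ 2 = gZ n m α β γ ^ β := by
  have h := PresentedGroup.mk_eq_mk_of_mul_inv_mem
    (rels := grels n m α β γ) (x := .of 1 ^ 2) (y := .of 2 ^ β) (by simp [grels])
  simp only [map_pow, map_zpow] at h
  exact h

theorem gY_mul_gX :
    gY n m α β γ * gX n m α β γ = gX n m α β γ ^ (n - 1) * gY n m α β γ * gZ n m α β γ ^ γ := by
  have h := PresentedGroup.mk_eq_mk_of_mul_inv_mem
    (rels := grels n m α β γ) (x := .of 1 * .of 0) (y := .of 0 ^ (n - 1) * .of 1 * .of 2 ^ γ)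
    (by simp [grels])
  simp only [map_mul, map_pow, map_zpow] at h
  exact h

theorem commute_gY_gZ : Commute (gY n m α β γ) (gZ n m α β γ) := by
  have h := PresentedGroup.mk_eq_mk_of_mul_inv_mem
    (rels := grels n m α β γ) (x := .of 1 * .of 2) (y := .of 2 * .of 1) (by simp [grels])
  simp only [map_mul] at h
  exact h

theorem commute_gX_gZ : Commute (gX n m α β γ) (gZ n m α β γ) := by
  have h := PresentedGroup.mk_eq_mk_of_mul_inv_mem
    (rels := grels n m α β γ) (x := .of 0 * .of 2) (y := .of 2 * .of 0) (by simp [grels])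
  simp only [map_mul] at h
  exact h

theorem gZ_pow_eq_one : gZ n m α β γ ^ m = 1 := by
  have h := PresentedGroup.one_of_mem
    (rels := grels n m α β γ) (x := .of 2 ^ m) (by simp [grels])
  simp only [map_pow] at h
  exact h

end Relations

namespace GG

variable {n m : ℕ} {α β γ : ℤ} {H : Type*} [Group H]

theorem lift_eq_one_of_mem_grels {x y z : H} (hX : x ^ n = z ^ α) (hY : y ^ 2 = z ^ β)
    (hYX : y * x = x ^ (n - 1) * y * z ^ γ) (hYZ : Commute y z) (hXZ : Commute x z)
    (hZ : z ^ m = 1) : ∀ r ∈ grels n m α β γ, FreeGroup.lift ![x, y, z] r = 1 := by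
  simp only [grels, Set.mem_insert_iff, Set.mem_singleton_iff]
  rintro r (rfl | rfl | rfl | rfl | rfl | rfl) <;>
    simp only [map_mul, map_inv, map_pow, map_zpow, FreeGroup.lift_apply_of, mul_inv_eq_one,
      Matrix.cons_val_zero, Matrix.cons_val_one, Matrix.cons_val_two, Matrix.head_cons,
      Matrix.tail_cons]
  exacts [hX, hY, hYX, hYZ, hXZ, hZ]

section Lift

variable {x y z : H} (hX : x ^ n = z ^ α) (hY : y ^ 2 = z ^ β)
  (hYX : y * x = x ^ (n - 1) * y * z ^ γ) (hYZ : Commute y z) (hXZ : Commute x z) (hZ : z ^ m = 1)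

def lift : GG n m α β γ →* H :=
  PresentedGroup.toGroup (lift_eq_one_of_mem_grels hX hY hYX hYZ hXZ hZ)

@[simp]
theorem lift_gX : lift hX hY hYX hYZ hXZ hZ (gX n m α β γ) = x :=
  PresentedGroup.toGroup.of _

@[simp]
theorem lift_gY : lift hX hY hYX hYZ hXZ hZ (gY n m α β γ) = y :=
  PresentedGroup.toGroup.of _

@[simp]
theorem lift_gZ : lift hX hY hYX hYZ hXZ hZ (gZ n m α β γ) = z :=
  PresentedGroup.toGroup.of _

end Lift

@[ext]
theorem hom_ext {φ ψ : GG n m α β γ →* H} (hX : φ (gX n m α β γ) = ψ (gX n m α β γ))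
    (hY : φ (gY n m α β γ) = ψ (gY n m α β γ)) (hZ : φ (gZ n m α β γ) = ψ (gZ n m α β γ)) :
    φ = ψ :=
  PresentedGroup.ext fun i => by fin_cases i <;> assumption

variable {β₁ β₂ : ℤ}

theorem gY_mul_gZ_zpow_sq (k : ℤ) (h : β₁ = β₂ + 2 * k) :
    (gY n m α β₂ γ * gZ n m α β₂ γ ^ k) ^ 2 = gZ n m α β₂ γ ^ β₁ := by
  rw [(commute_gY_gZ.zpow_right k).mul_pow, gY_sq, ← zpow_natCast, ← zpow_mul, ← zpow_add, h]
  congr 1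
  push_cast
  ring

theorem gY_mul_gZ_zpow_mul_gX (k : ℤ) :
    gY n m α β γ * gZ n m α β γ ^ k * gX n m α β γ =
      gX n m α β γ ^ (n - 1) * (gY n m α β γ * gZ n m α β γ ^ k) * gZ n m α β γ ^ γ := by
  rw [mul_assoc, ← (commute_gX_gZ.zpow_right k).eq, ← mul_assoc, gY_mul_gX]
  simp only [mul_assoc, ← zpow_add, add_comm γ k]

def twist (k : ℤ) (h : β₁ = β₂ + 2 * k) : GG n m α β₁ γ →* GG n m α β₂ γ :=
  lift gX_pow_eq (gY_mul_gZ_zpow_sq k h) (gY_mul_gZ_zpow_mul_gX k)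
    (commute_gY_gZ.mul_left ((Commute.refl _).zpow_left k)) commute_gX_gZ gZ_pow_eq_one

theorem twist_comp_twist {k l : ℤ} (h₁ : β₁ = β₂ + 2 * k) (h₂ : β₂ = β₁ + 2 * l) :
    (twist (n := n) (m := m) (α := α) (γ := γ) l h₂).comp (twist k h₁) = MonoidHom.id _ := by
  ext <;> simp [twist, mul_assoc, ← zpow_add, show l + k = 0 by omega]

def mulEquivOfDvdSub (h : (2 : ℤ) ∣ β₁ - β₂) : GG n m α β₁ γ ≃* GG n m α β₂ γ :=
  have h₁ : β₁ = β₂ + 2 * ((β₁ - β₂) / 2) := by omega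
  have h₂ : β₂ = β₁ + 2 * -((β₁ - β₂) / 2) := by omega
  MonoidHom.toMulEquiv _ _ (twist_comp_twist h₁ h₂) (twist_comp_twist h₂ h₁)

end GG

theorem stmt1_general (n m : ℕ) (α β γ : ℤ) :
    ∃ β' : ℤ, (β' = 0 ∨ β' = 1) ∧ Nonempty (GG n m α β γ ≃* GG n m α β' γ) :=
  ⟨β % 2, by omega, ⟨GG.mulEquivOfDvdSub (by omega)⟩⟩

/-- Every central extension `G(α, β, γ)` of `D_{2n}` by `ℤ/mℤ` is isomorphic to one
of the groups `G(α, β', γ)` with `β' = 0` or `β' = 1`. -/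
theorem stmt1 (n m : ℕ) (hn : 3 ≤ n) (hm : 1 ≤ m) (α β γ : ℤ) :
    ∃ β' : ℤ, (β' = 0 ∨ β' = 1) ∧ Nonempty (GG n m α β γ ≃* GG n m α β' γ) :=
  stmt1_general n m α β γ
end

section
/- Let n and m both be even. Then H²(D_{2n}, Z/mZ) with trivial coefficients is isomorphic to Z/2Z × Z/2Z × Z/2Z. -/
/-!
A trivial 2-cocycle `f` on `D_{2n} = ⟨r, s⟩` defines a central extension `E` of `D_{2n}` by
`A = ℤ/mℤ`. Lifting `r` and `s` to `R` and `S` in `E`, the elements `S²`, `(SR)²` and `Rⁿ` lie in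
`A`; conjugating `Rⁿ` by `S` gives `2 Rⁿ = n ((SR)² - S²)`, so `δ = Rⁿ - (n/2) ((SR)² - S²)` is
2-torsion. A coboundary changes `S²` and `(SR)²` by even elements and leaves `δ` alone, and
conversely a cocycle with `S²`, `(SR)²` even and `δ = 0` is a coboundary, since it can be killed
by an explicit 1-cochain. Hence `f ↦ (S² mod 2, (SR)² mod 2, δ)` embeds `H²` into `(ℤ/2)³`.
The cup squares of the two characters `D_{2n} → ℤ/2` and the cocycle of the double cover
`D_{4n} → D_{2n}` (scaled by `m/2`) map to three generators.
-/

open DihedralGroup groupCohomology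

namespace DihedralH2

section Cocycles

variable {G A : Type*} [Group G] [AddCommGroup A]

def IsCocycle₂Triv (f : G × G → A) : Prop :=
  ∀ g h k, f (g * h, k) + f (g, h) = f (h, k) + f (g, h * k)

def d₁₂Triv : (G → A) →+ (G × G → A) :=
  AddMonoidHom.mk' (fun φ p => φ p.2 - φ (p.1 * p.2) + φ p.1) (fun _ _ => by
    ext
    simp only [Pi.add_apply]
    abel)

theorem d₁₂Triv_apply (φ : G → A) (g h : G) : d₁₂Triv φ (g, h) = φ h - φ (g * h) + φ g := rfl

theorem isCocycle₂Triv_d₁₂Triv (φ : G → A) : IsCocycle₂Triv (d₁₂Triv φ) := by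
  intro g h k
  simp only [d₁₂Triv_apply, mul_assoc]
  abel

theorem d₁₂Triv_const (c : A) : d₁₂Triv (fun _ : G => c) = fun _ => c := by
  ext ⟨g, h⟩
  simp [d₁₂Triv_apply]

def normalize (f : G × G → A) : G × G → A := f - d₁₂Triv fun _ => f (1, 1)

theorem normalize_one_one (f : G × G → A) : normalize f (1, 1) = 0 := by
  simp [normalize, d₁₂Triv_const]

namespace IsCocycle₂Triv

variable {f : G × G → A}

theorem sub (hf : IsCocycle₂Triv f) {f' : G × G → A} (hf' : IsCocycle₂Triv f') :
    IsCocycle₂Triv (f - f') := by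
  intro g h k
  simp only [Pi.sub_apply]
  linear_combination (norm := abel) hf g h k - hf' g h k

theorem map_one_fst (hf : IsCocycle₂Triv f) (g : G) : f (1, g) = f (1, 1) := by
  simpa using (hf 1 1 g).symm

theorem map_one_snd (hf : IsCocycle₂Triv f) (g : G) : f (g, 1) = f (1, 1) := by
  simpa [add_comm] using hf g 1 1

end IsCocycle₂Triv

theorem isCocycle₂Triv_normalize {f : G × G → A} (hf : IsCocycle₂Triv f) :
    IsCocycle₂Triv (normalize f) :=
  hf.sub (isCocycle₂Triv_d₁₂Triv _)

/-- The central extension `1 → A → E → G → 1` defined by a normalised cocycle `f`. -/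
@[ext]
structure CocycleExt (f : G × G → A) (hf : IsCocycle₂Triv f) (h1 : f (1, 1) = 0) where
  a : A
  g : G

namespace CocycleExt

variable {f : G × G → A} {hf : IsCocycle₂Triv f} {h1 : f (1, 1) = 0}

instance : Mul (CocycleExt f hf h1) := ⟨fun x y => ⟨x.a + y.a + f (x.g, y.g), x.g * y.g⟩⟩

instance : One (CocycleExt f hf h1) := ⟨⟨0, 1⟩⟩

instance : Inv (CocycleExt f hf h1) := ⟨fun x => ⟨-x.a - f (x.g⁻¹, x.g), x.g⁻¹⟩⟩

theorem mul_def (x y : CocycleExt f hf h1) :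
    x * y = ⟨x.a + y.a + f (x.g, y.g), x.g * y.g⟩ := rfl

instance : Group (CocycleExt f hf h1) :=
  Group.ofLeftAxioms
    (fun x y z => by
      simp only [mul_def, mk.injEq, mul_assoc, and_true]
      linear_combination (norm := abel) hf x.g y.g z.g)
    (fun x => by
      change (⟨0 + x.a + f (1, x.g), 1 * x.g⟩ : CocycleExt f hf h1) = x
      rw [hf.map_one_fst, h1, zero_add, add_zero, one_mul])
    (fun x => by
      change (⟨-x.a - f (x.g⁻¹, x.g) + x.a + f (x.g⁻¹, x.g), x.g⁻¹ * x.g⟩ : CocycleExt f hf h1) =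
        ⟨0, 1⟩
      rw [inv_mul_cancel]
      congr 1
      abel)

variable (f hf h1) in
def central : Multiplicative A →* CocycleExt f hf h1 where
  toFun a := ⟨a.toAdd, 1⟩
  map_one' := rfl
  map_mul' a b := by
    change _ = (⟨a.toAdd + b.toAdd + f (1, 1), 1 * 1⟩ : CocycleExt f hf h1)
    rw [h1, add_zero, one_mul]
    rfl

theorem central_apply (a : Multiplicative A) : central f hf h1 a = ⟨a.toAdd, 1⟩ := rfl

theorem central_injective : Function.Injective (central f hf h1) :=
  fun _ _ h => congrArg (fun x : CocycleExt f hf h1 => Multiplicative.ofAdd x.a) h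

theorem commute_central (a : Multiplicative A) (x : CocycleExt f hf h1) :
    Commute (central f hf h1 a) x := by
  change (⟨a.toAdd + x.a + f (1, x.g), 1 * x.g⟩ : CocycleExt f hf h1) =
    ⟨x.a + a.toAdd + f (x.g, 1), x.g * 1⟩
  rw [hf.map_one_fst, hf.map_one_snd x.g, one_mul, mul_one, add_comm a.toAdd]

end CocycleExt

end Cocycles

section Dihedral

variable {n : ℕ} {A : Type*} [AddCommGroup A]

/- In the extension defined by a normalised `f`, with `R = (0, r 1)` and `S = (0, sr 0)`, one has
`Rᵏ = (rotSum k f, r k)`, `S² = (reflSq f, 1)` and `(SR)² = (reflRotSq f, 1)`. The `f (1, 1)` terms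
make `reflSq` and `reflRotSq` change by even amounts under coboundaries. -/
def rotSum (k : ℕ) : (DihedralGroup n × DihedralGroup n → A) →+ A :=
  AddMonoidHom.mk' (fun f => ∑ j ∈ Finset.range k, f (r j, r 1))
    (fun _ _ => Finset.sum_add_distrib)

def reflSq : (DihedralGroup n × DihedralGroup n → A) →+ A :=
  AddMonoidHom.mk' (fun f => f (sr 0, sr 0) + f (1, 1)) (fun _ _ => add_add_add_comm ..)

def reflRotSq : (DihedralGroup n × DihedralGroup n → A) →+ A :=
  AddMonoidHom.mk' (fun f => 2 • f (sr 0, r 1) + f (sr 1, sr 1) + f (1, 1))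
    (fun _ _ => by simp only [Pi.add_apply]; abel)

def defect : (DihedralGroup n × DihedralGroup n → A) →+ A :=
  rotSum n - (n / 2) • (reflRotSq - reflSq)

variable {f : DihedralGroup n × DihedralGroup n → A}

theorem rotSum_apply (k : ℕ) : rotSum k f = ∑ j ∈ Finset.range k, f (r j, r 1) := rfl

theorem reflSq_apply : reflSq f = f (sr 0, sr 0) + f (1, 1) := rfl

theorem reflRotSq_apply : reflRotSq f = 2 • f (sr 0, r 1) + f (sr 1, sr 1) + f (1, 1) := rfl

theorem defect_apply : defect f = rotSum n f - (n / 2) • (reflRotSq f - reflSq f) := rfl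

theorem rotSum_succ (k : ℕ) : rotSum (k + 1) f = rotSum k f + f (r k, r 1) :=
  Finset.sum_range_succ _ _

theorem rotSum_n_add (k : ℕ) : rotSum (n + k) f = rotSum n f + rotSum k f := by
  simp only [rotSum_apply, Finset.sum_range_add, Nat.cast_add, ZMod.natCast_self, zero_add]

theorem two_nsmul_rotSum_n (hf : IsCocycle₂Triv f) (h1 : f (1, 1) = 0) :
    2 • rotSum n f = n • (reflRotSq f - reflSq f) := by
  let ι := CocycleExt.central f hf h1
  have hcomm : ∀ a x, Commute (ι a) x := CocycleExt.commute_central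
  let R : CocycleExt f hf h1 := ⟨0, r 1⟩
  let S : CocycleExt f hf h1 := ⟨0, sr 0⟩
  have hR : ∀ k : ℕ, R ^ k = ⟨rotSum k f, r k⟩ := by
    intro k
    induction k with
    | zero => simp only [pow_zero, rotSum_apply, Finset.sum_range_zero, Nat.cast_zero]; rfl
    | succ k ih =>
      rw [pow_succ, ih, CocycleExt.mul_def, rotSum_succ, r_mul_r, Nat.cast_succ, add_zero]
  have hRn : R ^ n = ι (.ofAdd (rotSum n f)) := by
    rw [hR, ZMod.natCast_self]; rfl
  have hSS : S * S = ι (.ofAdd (reflSq f)) := by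
    ext <;> simp [S, ι, CocycleExt.mul_def, CocycleExt.central_apply, reflSq_apply, h1]
  have hSR : S * R * (S * R) = ι (.ofAdd (reflRotSq f)) := by
    ext <;>
      simp [S, R, ι, CocycleExt.mul_def, CocycleExt.central_apply, reflRotSq_apply, h1, two_nsmul]
  have hconj : S * R * S⁻¹ = ι (.ofAdd (reflRotSq f - reflSq f)) * R⁻¹ := by
    calc S * R * S⁻¹ = S * R * (S * R) * R⁻¹ * (S * S)⁻¹ := by group
      _ = _ := by
        rw [hSR, hSS, ofAdd_sub, map_div, div_eq_mul_inv, mul_assoc,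
          ← (hcomm _ R⁻¹).inv_left.eq, ← mul_assoc]
  have hRn_conj : R ^ n = ι (.ofAdd (n • (reflRotSq f - reflSq f))) * (R ^ n)⁻¹ :=
    calc R ^ n = S * R ^ n * S⁻¹ := by rw [hRn, ← (hcomm _ S).eq, mul_inv_cancel_right]
      _ = (S * R * S⁻¹) ^ n := conj_pow.symm
      _ = _ := by rw [hconj, (hcomm _ _).mul_pow, ← map_pow, ← ofAdd_nsmul, inv_pow]
  apply Multiplicative.ofAdd.injective
  apply CocycleExt.central_injective (hf := hf) (h1 := h1)
  rw [ofAdd_nsmul, map_pow, ← hRn, ← eq_mul_inv_iff_mul_eq.mp hRn_conj, pow_two]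

theorem IsCocycle₂Triv.apply_r_r (hf : IsCocycle₂Triv f) (h1 : f (1, 1) = 0) (a b : ℕ) :
    f (r a, r b) = rotSum (a + b) f - rotSum a f - rotSum b f := by
  induction b with
  | zero => simp [rotSum_apply, hf.map_one_snd, h1]
  | succ b ih =>
    have h := hf (r a) (r b) (r 1)
    simp only [r_mul_r, ← Nat.cast_add, ← Nat.cast_succ] at h
    rw [← add_assoc, rotSum_succ, rotSum_succ]
    linear_combination (norm := abel) ih - h

theorem rotSum_d₁₂Triv (φ : DihedralGroup n → A) (k : ℕ) :
    rotSum k (d₁₂Triv φ) = k • φ (r 1) + φ (r 0) - φ (r k) := by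
  induction k with
  | zero => simp [rotSum_apply]
  | succ k ih =>
    rw [rotSum_succ, ih, d₁₂Triv_apply, r_mul_r, Nat.cast_succ, succ_nsmul]
    abel

theorem reflSq_d₁₂Triv (φ : DihedralGroup n → A) : reflSq (d₁₂Triv φ) = 2 • φ (sr 0) := by
  simp only [reflSq_apply, d₁₂Triv_apply, sr_mul_sr, sub_self, one_mul, ← one_def]
  abel

theorem reflRotSq_d₁₂Triv (φ : DihedralGroup n → A) :
    reflRotSq (d₁₂Triv φ) = 2 • (φ (r 1) + φ (sr 0)) := by
  simp only [reflRotSq_apply, d₁₂Triv_apply, sr_mul_sr, sr_mul_r, sub_self, zero_add, one_mul,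
    ← one_def]
  abel

theorem defect_d₁₂Triv (hn2 : 2 ∣ n) (φ : DihedralGroup n → A) : defect (d₁₂Triv φ) = 0 := by
  rw [defect_apply, rotSum_d₁₂Triv, reflRotSq_d₁₂Triv, reflSq_d₁₂Triv, ZMod.natCast_self,
    ← smul_sub, smul_smul, Nat.div_mul_cancel hn2, add_sub_cancel_right, add_sub_cancel_right,
    sub_self]

theorem defect_normalize (hn2 : 2 ∣ n) : defect (normalize f) = defect f := by
  rw [normalize, map_sub, defect_d₁₂Triv hn2, sub_zero]

theorem two_nsmul_defect (hn2 : 2 ∣ n) (hf : IsCocycle₂Triv f) : 2 • defect f = 0 := by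
  rw [← defect_normalize hn2, defect_apply, smul_sub,
    two_nsmul_rotSum_n (isCocycle₂Triv_normalize hf) (normalize_one_one f), smul_smul,
    Nat.mul_div_cancel' hn2, sub_self]

theorem IsCocycle₂Triv.eq_zero_of_apply_r [NeZero n] {θ : DihedralGroup n × DihedralGroup n → A}
    (hθ : IsCocycle₂Triv θ) (hr : ∀ g (j : ZMod n), θ (g, r j) = 0)
    (h00 : θ (sr 0, sr 0) = 0) (h11 : θ (sr 1, sr 1) = 0) : θ = 0 := by
  have hsr : ∀ g (i : ZMod n), θ (g, sr i) = θ (g, sr 0) := by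
    intro g i
    simpa [sr_mul_r, hr] using hθ g (sr i) (r (-i))
  let u : DihedralGroup n → A := fun g => θ (g, sr 0)
  have hu_mul : ∀ g (i : ZMod n), u (g * r i) = u (r i) + u g := by
    intro g i
    simpa [u, r_mul_sr, hr, hsr g] using hθ g (r i) (sr 0)
  have hu_r1 : u (r 1) = 0 := by
    have h := hu_mul (sr 0) 1
    rw [sr_mul_r, zero_add] at h
    simpa [u, ← hsr (sr 1) 1, h11, h00] using h.symm
  have hu_r : ∀ i : ZMod n, u (r i) = 0 := by
    intro i
    rw [← ZMod.natCast_zmod_val i]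
    induction i.val with
    | zero => simpa [u, ← one_def, hθ.map_one_fst] using hr 1 0
    | succ k ih => rw [Nat.cast_succ, ← r_mul_r, hu_mul, hu_r1, ih, add_zero]
  ext ⟨g, h⟩
  cases h with
  | r j => exact hr g j
  | sr j =>
    rw [hsr]
    cases g with
    | r i => exact hu_r i
    | sr i => simpa [u, hu_r, h00] using hu_mul (sr 0) i

/- When `rotSum n f = n • x`, the corrected partial sums `rotPotential f x` are `n`-periodic, so
they descend to `ZMod n`. -/
def rotPotential (f : DihedralGroup n × DihedralGroup n → A) (x : A) (k : ℕ) : A :=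
  rotSum k f - k • x

def primitive (f : DihedralGroup n × DihedralGroup n → A) (b x : A) : DihedralGroup n → A
  | r i => -rotPotential f x i.val
  | sr i => b - f (sr 0, r i) - rotPotential f x i.val

theorem IsCocycle₂Triv.apply_r_eq_d₁₂Triv_primitive [NeZero n] (hf : IsCocycle₂Triv f)
    (h1 : f (1, 1) = 0) {x : A} (hα : rotSum n f = n • x) (b : A) (g : DihedralGroup n)
    (j : ZMod n) : f (g, r j) = d₁₂Triv (primitive f b x) (g, r j) := by
  have hP : Function.Periodic (rotPotential f x) n := by
    intro k
    simp only [rotPotential, add_comm k n, rotSum_n_add, hα, add_nsmul]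
    abel
  have hrr : ∀ i : ZMod n, f (r i, r j) = d₁₂Triv (primitive f b x) (r i, r j) := by
    intro i
    have h := hf.apply_r_r h1 i.val j.val
    rw [ZMod.natCast_zmod_val, ZMod.natCast_zmod_val] at h
    rw [h, d₁₂Triv_apply, r_mul_r]
    simp only [primitive, ZMod.val_add, hP.map_mod_nat]
    simp only [rotPotential, add_nsmul]
    abel
  cases g with
  | r i => exact hrr i
  | sr i =>
    have h := hf (sr 0) (r i) (r j)
    simp only [sr_mul_r, zero_add, r_mul_r] at h
    have h' := hrr i
    rw [d₁₂Triv_apply, r_mul_r] at h'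
    rw [d₁₂Triv_apply, sr_mul_r]
    simp only [primitive] at h' ⊢
    linear_combination (norm := abel) h + h'

theorem IsCocycle₂Triv.exists_d₁₂Triv_eq_of_normalized [NeZero n] (hn1 : 1 < n) (hn2 : 2 ∣ n)
    (hf : IsCocycle₂Triv f) (h1 : f (1, 1) = 0) {b c : A}
    (hb : reflSq f = 2 • b) (hc : reflRotSq f = 2 • c) (hd : defect f = 0) :
    ∃ φ, d₁₂Triv φ = f := by
  have : Fact (1 < n) := ⟨hn1⟩
  have hα : rotSum n f = n • (c - b) := by
    rwa [defect_apply, hb, hc, ← smul_sub, smul_smul, Nat.div_mul_cancel hn2, sub_eq_zero] at hd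
  set φ := primitive f b (c - b)
  have hφ1 : φ (r 0) = 0 := by
    change -rotPotential f (c - b) (0 : ZMod n).val = 0
    simp [rotPotential, rotSum_apply]
  have hφs0 : φ (sr 0) = b := by
    change b - f (sr 0, r 0) - rotPotential f (c - b) (0 : ZMod n).val = b
    simp [rotPotential, rotSum_apply, hf.map_one_snd, h1]
  have hφs1 : φ (sr 1) = c - f (sr 0, r 1) := by
    change b - f (sr 0, r 1) - rotPotential f (c - b) (1 : ZMod n).val = _
    simp only [rotPotential, ZMod.val_one, rotSum_apply, Finset.sum_range_one, Nat.cast_zero,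
      ← one_def, hf.map_one_fst, h1, one_smul]
    abel
  refine ⟨φ, (sub_eq_zero.mp ?_).symm⟩
  refine (hf.sub (isCocycle₂Triv_d₁₂Triv φ)).eq_zero_of_apply_r (fun g j => ?_) ?_ ?_
  · rw [Pi.sub_apply, sub_eq_zero]
    exact hf.apply_r_eq_d₁₂Triv_primitive h1 hα b g j
  · rw [Pi.sub_apply, d₁₂Triv_apply, sr_mul_sr, sub_self, hφ1, hφs0]
    rw [reflSq_apply, h1, add_zero] at hb
    rw [hb, two_nsmul]
    abel
  · rw [Pi.sub_apply, d₁₂Triv_apply, sr_mul_sr, sub_self, hφ1, hφs1]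
    rw [reflRotSq_apply, h1, add_zero] at hc
    linear_combination (norm := abel) hc

theorem IsCocycle₂Triv.exists_d₁₂Triv_eq [NeZero n] (hn1 : 1 < n) (hn2 : 2 ∣ n)
    (hf : IsCocycle₂Triv f) {b c : A}
    (hb : reflSq f = 2 • b) (hc : reflRotSq f = 2 • c) (hd : defect f = 0) :
    ∃ φ, d₁₂Triv φ = f := by
  obtain ⟨φ, hφ⟩ := (isCocycle₂Triv_normalize hf).exists_d₁₂Triv_eq_of_normalized hn1 hn2
    (normalize_one_one f) (b := b - f (1, 1)) (c := c - (f (1, 1) + f (1, 1)))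
    (by rw [normalize, map_sub, reflSq_d₁₂Triv, hb, smul_sub])
    (by rw [normalize, map_sub, reflRotSq_d₁₂Triv, hc, smul_sub])
    (by rw [defect_normalize hn2, hd])
  exact ⟨φ + fun _ => f (1, 1), by rw [map_add, hφ, normalize, sub_add_cancel]⟩

end Dihedral

section Generators

variable {G : Type*} [Group G]

def liftCupSq (R : Type*) [CommRing R] (χ : G → ZMod 2) : G × G → R :=
  fun p => (χ p.1).val * (χ p.2).val

theorem isCocycle₂Triv_liftCupSq (R : Type*) [CommRing R] {χ : G → ZMod 2}
    (hχ : ∀ g h, χ (g * h) = χ g + χ h) : IsCocycle₂Triv (liftCupSq R χ) := by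
  have hval : ∀ a b : ZMod 2, ((a + b).val : R) = a.val + b.val - 2 * a.val * b.val := by
    intro a b
    have h : (a + b).val + 2 * a.val * b.val = a.val + b.val := by revert a b; decide
    rw [eq_sub_iff_add_eq]
    simpa only [Nat.cast_add, Nat.cast_mul, Nat.cast_ofNat] using congrArg (Nat.cast : ℕ → R) h
  intro g h k
  simp only [liftCupSq, hχ, hval]
  ring

variable {E A : Type*} [Group E] [DecidableEq E] [AddCommGroup A]

/-- For a set-theoretic section `κ` of a central extension `E → G` with kernel `{1, z}`: its
2-cocycle, with `z` read as `a`. -/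
def carry (κ : G → E) (z : E) (a : A) : G × G → A :=
  fun p => if κ p.1 * κ p.2 * (κ (p.1 * p.2))⁻¹ = z then a else 0

theorem carry_apply_of_map_mul {κ : G → E} {z : E} (hz1 : z ≠ 1) (a : A) {g h : G}
    (hgh : κ (g * h) = κ g * κ h) : carry κ z a (g, h) = 0 := by
  simp [carry, hgh, hz1.symm]

theorem isCocycle₂Triv_carry {κ : G → E} {z : E} (π : E →* G) (hπκ : ∀ g, π (κ g) = g)
    (hker : ∀ x, π x = 1 → x = 1 ∨ x = z) (hz : ∀ x, Commute z x) (hz1 : z ≠ 1)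
    (hz2 : z * z = 1) {a : A} (ha : 2 • a = 0) : IsCocycle₂Triv (carry κ z a) := by
  rw [two_nsmul] at ha
  let c : G → G → E := fun g h => κ g * κ h * (κ (g * h))⁻¹
  have hc : ∀ g h, c g h = 1 ∨ c g h = z := fun g h => hker _ (by simp [c, hπκ])
  have hcomm : ∀ g h x, Commute (c g h) x := by
    intro g h x
    rcases hc g h with e | e <;> rw [e]
    exacts [Commute.one_left x, hz x]
  have hassoc : ∀ g h k, c g h * c (g * h) k = c h k * c g (h * k) := by
    intro g h k
    calc c g h * c (g * h) k = κ g * (c h k * (κ (h * k) * (κ (g * h * k))⁻¹)) := by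
          simp only [c]; group
      _ = c h k * c g (h * k) := by
          rw [← mul_assoc, ← (hcomm h k (κ g)).eq, mul_assoc, mul_assoc g]
          simp only [c, mul_assoc]
  let ι : E → A := fun x => if x = z then a else 0
  have hι : ∀ x y, (x = 1 ∨ x = z) → (y = 1 ∨ y = z) → ι (x * y) = ι x + ι y := by
    rintro x y (rfl | rfl) (rfl | rfl) <;> simp [ι, hz1.symm, hz2, ha]
  intro g h k
  change ι (c (g * h) k) + ι (c g h) = ι (c h k) + ι (c g (h * k))
  rw [add_comm, ← hι _ _ (hc g h) (hc _ k), hassoc, hι _ _ (hc h k) (hc g _)]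

end Generators

section DihedralGenerators

variable {n : ℕ}

def reflChar : DihedralGroup n → ZMod 2
  | r _ => 0
  | sr _ => 1

def rotParity : DihedralGroup n → ZMod 2
  | r i => i.cast
  | sr i => i.cast

@[simp] theorem reflChar_r (i : ZMod n) : reflChar (r i) = 0 := rfl

@[simp] theorem reflChar_sr (i : ZMod n) : reflChar (sr i) = 1 := rfl

@[simp] theorem reflChar_one : reflChar (1 : DihedralGroup n) = 0 := rfl

@[simp] theorem rotParity_r (i : ZMod n) : rotParity (r i) = i.cast := rfl

@[simp] theorem rotParity_sr (i : ZMod n) : rotParity (sr i) = i.cast := rfl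

@[simp] theorem rotParity_one : rotParity (1 : DihedralGroup n) = 0 := ZMod.cast_zero

theorem reflChar_mul (g h : DihedralGroup n) : reflChar (g * h) = reflChar g + reflChar h := by
  cases g <;> cases h <;> rfl

theorem rotParity_mul (hn2 : 2 ∣ n) (g h : DihedralGroup n) :
    rotParity (g * h) = rotParity g + rotParity h := by
  cases g <;> cases h <;>
    simp [ZMod.cast_add hn2, sub_eq_add_neg, ZMod.cast_neg hn2,
      ZMod.neg_eq_self_mod_two, add_comm]

theorem sum_range_mod_two (k : ℕ) : ∑ j ∈ Finset.range k, j % 2 = k / 2 := by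
  induction k with
  | zero => rfl
  | succ k ih => rw [Finset.sum_range_succ, ih]; omega

def dihedralMap {k d : ℕ} (h : d ∣ k) : DihedralGroup k →* DihedralGroup d where
  toFun
    | r i => r (ZMod.castHom h _ i)
    | sr i => sr (ZMod.castHom h _ i)
  map_one' := congrArg r (map_zero _)
  map_mul' := by rintro (i | i) (j | j) <;> simp [ZMod.cast_add h, ZMod.cast_sub h]

/- Mathlib's `DihedralGroup n` is `D_{2n}`; `liftVal` is the section of the double cover
`D_{4n} → D_{2n}` through the representatives `0 ≤ i < n`. -/
def liftVal : DihedralGroup n → DihedralGroup (2 * n)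
  | r i => r i.val
  | sr i => sr i.val

theorem dihedralMap_liftVal [NeZero n] (g : DihedralGroup n) :
    dihedralMap (dvd_mul_left n 2) (liftVal g) = g := by
  cases g <;> simp [dihedralMap, liftVal, -ZMod.natCast_val, ZMod.cast_natCast (dvd_mul_left n 2),
    ZMod.natCast_zmod_val]

theorem eq_one_or_eq_r_of_dihedralMap_eq_one [NeZero n] {x : DihedralGroup (2 * n)}
    (hx : dihedralMap (dvd_mul_left n 2) x = 1) : x = 1 ∨ x = r n := by
  have : NeZero (2 * n) := ⟨mul_ne_zero two_ne_zero (NeZero.ne n)⟩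
  cases x with
  | sr i => cases hx
  | r i =>
    have hi : ((i.val : ZMod (2 * n)).cast : ZMod n) = 0 := by
      rw [ZMod.natCast_zmod_val]
      exact r.inj hx
    rw [ZMod.cast_natCast (dvd_mul_left n 2), ZMod.natCast_eq_zero_iff] at hi
    obtain ⟨t, ht⟩ := hi
    have hlt := ZMod.val_lt i
    have ht2 : t < 2 := by nlinarith [NeZero.pos n]
    rw [← ZMod.natCast_zmod_val i, ht]
    interval_cases t <;> simp

theorem commute_r_n (x : DihedralGroup (2 * n)) : Commute (r (n : ZMod (2 * n))) x := by
  have h : (n : ZMod (2 * n)) + n = 0 := by rw [← Nat.cast_add, ← two_mul, ZMod.natCast_self]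
  cases x with
  | r j => exact congrArg r (add_comm _ _)
  | sr j => exact congrArg sr (by linear_combination -h)

theorem r_n_mul_r_n : (r (n : ZMod (2 * n)) : DihedralGroup (2 * n)) * r n = 1 := by
  rw [r_mul_r, ← Nat.cast_add, ← two_mul, ZMod.natCast_self, one_def]

theorem r_n_ne_one [NeZero n] : (r (n : ZMod (2 * n)) : DihedralGroup (2 * n)) ≠ 1 := by
  rw [one_def, Ne, r.injEq, ZMod.natCast_eq_zero_iff]
  exact fun h => absurd (Nat.le_of_dvd (NeZero.pos n) h) (by have := NeZero.pos n; omega)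

theorem liftVal_r_mul_r [NeZero n] {i j : ZMod n} (h : i.val + j.val < n) :
    liftVal (r i * r j) = liftVal (r i) * liftVal (r j) := by
  simp [liftVal, ZMod.val_add_of_lt h, -ZMod.natCast_val]

theorem liftVal_sr_mul_r [NeZero n] {i j : ZMod n} (h : i.val + j.val < n) :
    liftVal (sr i * r j) = liftVal (sr i) * liftVal (r j) := by
  simp [liftVal, ZMod.val_add_of_lt h, -ZMod.natCast_val]

theorem liftVal_sr_mul_sr_self (i : ZMod n) :
    liftVal (sr i * sr i) = liftVal (sr i) * liftVal (sr i) := by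
  simp only [liftVal, sr_mul_sr, sub_self, ZMod.val_zero, Nat.cast_zero]

variable {A : Type*} [AddCommGroup A]

theorem isCocycle₂Triv_carry_liftVal [NeZero n] {a : A} (ha : 2 • a = 0) :
    IsCocycle₂Triv (carry liftVal (r (n : ZMod (2 * n))) a) :=
  isCocycle₂Triv_carry (dihedralMap (dvd_mul_left n 2)) dihedralMap_liftVal
    (fun _ => eq_one_or_eq_r_of_dihedralMap_eq_one) commute_r_n r_n_ne_one r_n_mul_r_n ha

theorem reflSq_carry_liftVal [NeZero n] (a : A) :
    reflSq (carry liftVal (r (n : ZMod (2 * n))) a) = 0 := by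
  rw [reflSq_apply, carry_apply_of_map_mul r_n_ne_one a (liftVal_sr_mul_sr_self 0),
    one_def, carry_apply_of_map_mul r_n_ne_one a (liftVal_r_mul_r (by simp [NeZero.pos n])),
    add_zero]

theorem reflRotSq_carry_liftVal [NeZero n] (hn1 : 1 < n) (a : A) :
    reflRotSq (carry liftVal (r (n : ZMod (2 * n))) a) = 0 := by
  have : Fact (1 < n) := ⟨hn1⟩
  rw [reflRotSq_apply, carry_apply_of_map_mul r_n_ne_one a (liftVal_sr_mul_sr_self 1),
    carry_apply_of_map_mul r_n_ne_one a
      (liftVal_sr_mul_r (by rw [ZMod.val_zero, ZMod.val_one]; omega)),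
    one_def, carry_apply_of_map_mul r_n_ne_one a (liftVal_r_mul_r (by simp [NeZero.pos n]))]
  simp

theorem rotSum_carry_liftVal [NeZero n] (hn1 : 1 < n) (a : A) :
    rotSum n (carry liftVal (r (n : ZMod (2 * n))) a) = a := by
  have : Fact (1 < n) := ⟨hn1⟩
  rw [rotSum_apply, Finset.sum_eq_single (n - 1)]
  · have hlast : ((n - 1 : ℕ) : ZMod n) + 1 = 0 := by
      rw [← Nat.cast_add_one, Nat.sub_add_cancel hn1.le, ZMod.natCast_self]
    simp only [carry, r_mul_r, hlast, liftVal, ZMod.val_zero, ZMod.val_one,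
      ZMod.val_natCast_of_lt (Nat.sub_lt (NeZero.pos n) one_pos)]
    rw [if_pos]
    rw [Nat.cast_zero, r_zero, inv_one, mul_one, Nat.cast_one, ← Nat.cast_add_one,
      Nat.sub_add_cancel hn1.le]
  · intro j hj hne
    have hj' : j + 1 < n := by simp at hj; omega
    exact carry_apply_of_map_mul r_n_ne_one a
      (liftVal_r_mul_r (by rwa [ZMod.val_natCast_of_lt (by omega), ZMod.val_one]))
  · simp [NeZero.pos n]

end DihedralGenerators

section ZModCoefficients

variable {m : ℕ}

/- Additive on the 2-torsion `{0, m/2}` (`torsionBit_add`); no homomorphism `ZMod m → ZMod 2`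
detects `m/2` when `4 ∣ m`. -/
def torsionBit (x : ZMod m) : ZMod 2 := if x = 0 then 0 else 1

theorem half_ne_zero [NeZero m] (hm2 : 2 ∣ m) : ((m / 2 : ℕ) : ZMod m) ≠ 0 := by
  rw [Ne, ZMod.natCast_eq_zero_iff]
  intro h
  have := Nat.le_of_dvd (Nat.div_pos (Nat.le_of_dvd (NeZero.pos m) hm2) two_pos) h
  have := NeZero.pos m
  omega

theorem two_nsmul_half (hm2 : 2 ∣ m) : 2 • ((m / 2 : ℕ) : ZMod m) = 0 := by
  rw [nsmul_eq_mul, ← Nat.cast_mul, Nat.mul_div_cancel' hm2, ZMod.natCast_self]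

theorem eq_zero_or_eq_half [NeZero m] {x : ZMod m} (hx : 2 • x = 0) :
    x = 0 ∨ x = ((m / 2 : ℕ) : ZMod m) := by
  rw [← ZMod.natCast_zmod_val x, nsmul_eq_mul, ← Nat.cast_mul, ZMod.natCast_eq_zero_iff] at hx
  obtain ⟨t, ht⟩ := hx
  have hlt := ZMod.val_lt x
  have ht2 : t < 2 := by nlinarith
  rw [← ZMod.natCast_zmod_val x]
  interval_cases t
  · left; simp [show x.val = 0 by omega]
  · right; congr 1; omega

theorem torsionBit_add [NeZero m] (hm2 : 2 ∣ m) {x y : ZMod m} (hx : 2 • x = 0) (hy : 2 • y = 0) :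
    torsionBit (x + y) = torsionBit x + torsionBit y := by
  have h := two_nsmul_half hm2
  rw [two_nsmul] at h
  rcases eq_zero_or_eq_half hx with rfl | rfl <;> rcases eq_zero_or_eq_half hy with rfl | rfl <;>
    simp [torsionBit, half_ne_zero hm2, h, show (1 + 1 : ZMod 2) = 0 from rfl]

theorem exists_eq_two_nsmul [NeZero m] (hm2 : 2 ∣ m) {x : ZMod m}
    (hx : ZMod.castHom hm2 (ZMod 2) x = 0) : ∃ y, x = 2 • y := by
  rw [← ZMod.natCast_zmod_val x, map_natCast, ZMod.natCast_eq_zero_iff] at hx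
  obtain ⟨t, ht⟩ := hx
  exact ⟨t, by rw [← ZMod.natCast_zmod_val x, ht, Nat.cast_mul, nsmul_eq_mul, Nat.cast_ofNat]⟩

end ZModCoefficients

section Invariants

variable {n m : ℕ} (hm2 : 2 ∣ m)

def invariants (f : DihedralGroup n × DihedralGroup n → ZMod m) : ZMod 2 × ZMod 2 × ZMod 2 :=
  (ZMod.castHom hm2 _ (reflSq f), ZMod.castHom hm2 _ (reflRotSq f), torsionBit (defect f))

theorem invariants_add [NeZero m] (hn2 : 2 ∣ n) {f g : DihedralGroup n × DihedralGroup n → ZMod m}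
    (hf : IsCocycle₂Triv f) (hg : IsCocycle₂Triv g) :
    invariants hm2 (f + g) = invariants hm2 f + invariants hm2 g := by
  simp only [invariants, map_add,
    torsionBit_add hm2 (two_nsmul_defect hn2 hf) (two_nsmul_defect hn2 hg), Prod.mk_add_mk]

theorem invariants_d₁₂Triv (hn2 : 2 ∣ n) (φ : DihedralGroup n → ZMod m) :
    invariants hm2 (d₁₂Triv φ) = 0 := by
  have hchar : ∀ x : ZMod 2, 2 • x = 0 := by decide
  simp only [invariants, reflSq_d₁₂Triv, reflRotSq_d₁₂Triv, defect_d₁₂Triv hn2, map_nsmul, hchar,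
    torsionBit, if_true, Prod.mk_zero_zero]

theorem IsCocycle₂Triv.exists_d₁₂Triv_eq_of_invariants_eq_zero [NeZero n] [NeZero m] (hn1 : 1 < n)
    (hn2 : 2 ∣ n) {f : DihedralGroup n × DihedralGroup n → ZMod m} (hf : IsCocycle₂Triv f)
    (h : invariants hm2 f = 0) : ∃ φ, d₁₂Triv φ = f := by
  simp only [invariants, Prod.mk_eq_zero] at h
  obtain ⟨hβ, hγ, hδ⟩ := h
  obtain ⟨b, hb⟩ := exists_eq_two_nsmul hm2 hβ
  obtain ⟨c, hc⟩ := exists_eq_two_nsmul hm2 hγ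
  have hd : defect f = 0 := by
    by_contra hne
    simp [torsionBit, hne] at hδ
  exact hf.exists_d₁₂Triv_eq hn1 hn2 hb hc hd

theorem invariants_liftCupSq_reflChar :
    invariants hm2 (liftCupSq (ZMod m) (reflChar (n := n))) = (1, 1, 0) := by
  simp [invariants, torsionBit, defect_apply, rotSum_apply, reflSq_apply, reflRotSq_apply,
    liftCupSq, -ZMod.natCast_val, ZMod.val_one, ZMod.cast_one hm2]

theorem invariants_liftCupSq_rotParity (hn2 : 2 ∣ n) :
    invariants hm2 (liftCupSq (ZMod m) (rotParity (n := n))) = (0, 1, 0) := by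
  have hα : rotSum n (liftCupSq (ZMod m) (rotParity (n := n))) = (n / 2 : ℕ) := by
    simp only [rotSum_apply, liftCupSq, rotParity_r, ZMod.cast_one hn2,
      ZMod.cast_natCast hn2, ZMod.val_natCast, ZMod.val_one, Nat.cast_one, mul_one]
    rw [← Nat.cast_sum, sum_range_mod_two]
  simp [invariants, torsionBit, defect_apply, hα, reflSq_apply, reflRotSq_apply,
    liftCupSq, ZMod.cast_one hn2, -ZMod.natCast_val, ZMod.val_one, ZMod.cast_one hm2]

theorem invariants_carry_liftVal [NeZero n] [NeZero m] (hn1 : 1 < n) :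
    invariants hm2 (carry liftVal (r (n : ZMod (2 * n))) ((m / 2 : ℕ) : ZMod m)) = (0, 0, 1) := by
  simp [invariants, defect_apply, reflSq_carry_liftVal, reflRotSq_carry_liftVal hn1,
    rotSum_carry_liftVal hn1, torsionBit, half_ne_zero hm2]

end Invariants

section Cohomology

universe u

theorem mem_cocycles₂_trivial_iff {k G A : Type u} [CommRing k] [Group G] [AddCommGroup A]
    [Module k A] (f : G × G → A) : f ∈ cocycles₂ (Rep.trivial k G A) ↔ IsCocycle₂Triv f := by
  rw [mem_cocycles₂_iff]
  rfl

theorem mem_coboundaries₂_trivial_iff {k G A : Type u} [CommRing k] [Group G] [AddCommGroup A]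
    [Module k A] (f : G × G → A) :
    f ∈ coboundaries₂ (Rep.trivial k G A) ↔ ∃ φ, d₁₂Triv φ = f := by
  simp only [coboundaries₂, LinearMap.mem_range, funext_iff, d₁₂_hom_apply, Prod.forall]
  rfl

theorem nonempty_H2_linearEquiv {k G : Type u} [CommRing k] [Group G] {A : Rep k G} {M : Type*}
    [AddCommGroup M] [Module k M] (L : cocycles₂ A →ₗ[k] M) (hL : Function.Surjective L)
    (hker : ∀ x, L x = 0 ↔ ⇑x ∈ coboundaries₂ A) : Nonempty (H2 A ≃ₗ[k] M) := by
  have hπ : Function.Surjective (H2π A).hom := (ModuleCat.epi_iff_surjective _).1 inferInstance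
  have hker' : LinearMap.ker L = LinearMap.ker (H2π A).hom := by
    ext x
    rw [LinearMap.mem_ker, LinearMap.mem_ker, hker]
    exact (H2π_eq_zero_iff x).symm
  exact ⟨((H2π A).hom.quotKerEquivOfSurjective hπ).symm ≪≫ₗ
    Submodule.quotEquivOfEq _ _ hker'.symm ≪≫ₗ L.quotKerEquivOfSurjective hL⟩

end Cohomology

theorem surjective_of_mem_range {M : Type*} [AddCommGroup M] (L : M →+ ZMod 2 × ZMod 2 × ZMod 2)
    (h₁ : (1, 1, 0) ∈ L.range) (h₂ : (0, 1, 0) ∈ L.range) (h₃ : (0, 0, 1) ∈ L.range) :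
    Function.Surjective L := by
  obtain ⟨⟨u, hu⟩, ⟨v, hv⟩, ⟨w, hw⟩⟩ := And.intro h₁ (And.intro h₂ h₃)
  rintro ⟨x, y, z⟩
  refine ⟨x.val • u + (x + y).val • v + z.val • w, ?_⟩
  simp only [map_add, map_nsmul, hu, hv, hw]
  revert x y z
  decide

section InvariantsHom

variable {n m : ℕ} [NeZero m] (hn2 : 2 ∣ n) (hm2 : 2 ∣ m)

def invariantsHom :
    cocycles₂ (Rep.trivial ℤ (DihedralGroup n) (ZMod m)) →+ ZMod 2 × ZMod 2 × ZMod 2 :=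
  AddMonoidHom.mk' (fun f => invariants hm2 ⇑f) fun f g =>
    invariants_add hm2 hn2 ((mem_cocycles₂_trivial_iff _).1 f.2)
      ((mem_cocycles₂_trivial_iff _).1 g.2)

theorem invariantsHom_surjective [NeZero n] (hn1 : 1 < n) :
    Function.Surjective (invariantsHom hn2 hm2) := by
  have hrange : ∀ {f}, IsCocycle₂Triv f → invariants hm2 f ∈ (invariantsHom hn2 hm2).range :=
    fun hf => ⟨⟨_, (mem_cocycles₂_trivial_iff _).2 hf⟩, rfl⟩
  exact surjective_of_mem_range _
    (invariants_liftCupSq_reflChar hm2 ▸ hrange (isCocycle₂Triv_liftCupSq _ reflChar_mul))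
    (invariants_liftCupSq_rotParity hm2 hn2 ▸
      hrange (isCocycle₂Triv_liftCupSq _ (rotParity_mul hn2)))
    (invariants_carry_liftVal hm2 hn1 ▸
      hrange (isCocycle₂Triv_carry_liftVal (two_nsmul_half hm2)))

theorem invariantsHom_eq_zero_iff [NeZero n] (hn1 : 1 < n)
    (f : cocycles₂ (Rep.trivial ℤ (DihedralGroup n) (ZMod m))) :
    invariantsHom hn2 hm2 f = 0 ↔
      ⇑f ∈ coboundaries₂ (Rep.trivial ℤ (DihedralGroup n) (ZMod m)) := by
  rw [mem_coboundaries₂_trivial_iff]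
  refine ⟨((mem_cocycles₂_trivial_iff _).1 f.2).exists_d₁₂Triv_eq_of_invariants_eq_zero hm2 hn1 hn2,
    ?_⟩
  rintro ⟨φ, hφ⟩
  exact (congrArg (invariants hm2) hφ).symm.trans (invariants_d₁₂Triv hm2 hn2 φ)

end InvariantsHom

end DihedralH2

open DihedralH2 in
/-- For `n, m` both even, `H²(D_{2n}, ℤ/mℤ) ≅ ℤ/2ℤ × ℤ/2ℤ × ℤ/2ℤ` (trivial
coefficients). -/
theorem stmt10 (n m : ℕ) (hn4 : 4 ≤ n) (hn : Even n) (hm1 : 1 ≤ m) (hm : Even m) :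
    Nonempty ((groupCohomology (Rep.trivial ℤ (DihedralGroup n) (ZMod m)) 2)
      ≃ₗ[ℤ] (ZMod 2 × ZMod 2 × ZMod 2)) := by
  have : NeZero n := ⟨by omega⟩
  have : NeZero m := ⟨by omega⟩
  have hn1 : 1 < n := by omega
  have hn2 := even_iff_two_dvd.mp hn
  have hm2 := even_iff_two_dvd.mp hm
  exact nonempty_H2_linearEquiv (invariantsHom hn2 hm2).toIntLinearMap
    (invariantsHom_surjective hn2 hm2 hn1) (invariantsHom_eq_zero_iff hn2 hm2 hn1)
end

section
/- Let n, m be even, and let G = ⟨X, Y, Z | X^n = Z^α, Y^2 = 1, YX = X^{n-1}YZ^γ, YZ = ZY, XZ = ZX, Z^m = 1⟩ satisfy (n/2)(α+γ) ≡ α + m/2 (mod m). Then the abelianization G/[G,G] has order 2m; equivalently, the group of homomorphisms from G to the multiplicative group of a field containing a primitive (2m)-th root of unity has order 2m. -/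
section NormalForm

variable {G : Type*} [Group G]

theorem zpow_emod_of_pow_eq_one {g : G} {k : ℕ} (h : g ^ k = 1) (i : ℤ) :
    g ^ (i % k) = g ^ i :=
  zpow_eq_zpow_iff_modEq.2 <|
    (Int.mod_modEq i k).of_dvd (Int.natCast_dvd_natCast.2 (orderOf_dvd_of_pow_eq_one h))

theorem pow_val_intCast_of_pow_eq_one {g : G} {k : ℕ} [NeZero k] (h : g ^ k = 1) (i : ℤ) :
    g ^ (i : ZMod k).val = g ^ i := by
  rw [← zpow_natCast, ZMod.val_intCast, zpow_emod_of_pow_eq_one h]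

theorem Subgroup.mem_closure_triple {A : Type*} [CommGroup A] {x y z g : A} :
    g ∈ closure {x, y, z} ↔ ∃ i j l : ℤ, x ^ i * y ^ j * z ^ l = g := by
  rw [← Set.singleton_union, closure_union, mem_sup]
  simp_rw [mem_closure_singleton, mem_closure_pair, exists_exists_eq_and]
  exact ⟨fun ⟨i, _, ⟨j, l, rfl⟩, h⟩ => ⟨i, j, l, by rw [mul_assoc, h]⟩,
    fun ⟨i, j, l, h⟩ => ⟨i, _, ⟨j, l, rfl⟩, by rw [← mul_assoc, h]⟩⟩

variable {A : Type*} [CommGroup A]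

def normalForm (y x z : A) (k : ℕ) (p : ZMod 2 × ZMod 2 × ZMod k) : A :=
  y ^ p.1.val * x ^ p.2.1.val * z ^ p.2.2.val

theorem normalForm_surjective {y x z : A} {s : ℤ} {k : ℕ} [NeZero k]
    (hgen : Subgroup.closure {y, x, z} = ⊤) (hy : y ^ 2 = 1) (hx : x ^ 2 = z ^ s)
    (hz : z ^ k = 1) : Function.Surjective (normalForm y x z k) := by
  intro g
  obtain ⟨i, j, l, rfl⟩ := Subgroup.mem_closure_triple.1 (hgen ▸ Subgroup.mem_top g)
  refine ⟨(i, j, ((l + s * (j / 2) : ℤ) : ZMod k)), ?_⟩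
  have hxj : x ^ j = x ^ (j % 2) * z ^ (s * (j / 2)) := by
    rw [zpow_mul, ← hx, ← zpow_natCast, ← zpow_mul, ← zpow_add]
    congr 1
    omega
  rw [normalForm, pow_val_intCast_of_pow_eq_one hy, pow_val_intCast_of_pow_eq_one hz,
    ← zpow_natCast x, ZMod.val_intCast, hxj, zpow_add, Nat.cast_ofNat]
  ac_rfl

open Multiplicative in
theorem normalForm_injective {y x z : A} {s : ℤ} {k : ℕ} [NeZero k]
    (φ : A →* Multiplicative (ZMod 2 × ZMod 2 × ZMod (2 * k)))
    (hφy : φ y = ofAdd (1, 0, 0)) (hφx : φ x = ofAdd (0, 1, (s : ZMod (2 * k))))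
    (hφz : φ z = ofAdd (0, 0, 2)) :
    Function.Injective (normalForm y x z k) := by
  rintro ⟨a, b, c⟩ ⟨a', b', c'⟩ h
  have h' := congrArg (fun g => toAdd (φ g)) h
  simp only [normalForm, map_mul, map_pow, hφy, hφx, hφz, toAdd_mul, toAdd_pow, toAdd_ofAdd,
    Prod.smul_mk, nsmul_eq_mul, mul_one, mul_zero, Prod.mk_add_mk, add_zero, zero_add,
    ZMod.natCast_zmod_val, Prod.mk.injEq] at h'
  obtain ⟨rfl, rfl, hc⟩ := h'
  have hcc : ((c.val * 2 : ℕ) : ZMod (2 * k)) = ((c'.val * 2 : ℕ) : ZMod (2 * k)) := by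
    push_cast
    exact add_left_cancel hc
  rw [ZMod.natCast_eq_natCast_iff', Nat.mod_eq_of_lt (by linarith [c.val_lt]),
    Nat.mod_eq_of_lt (by linarith [c'.val_lt])] at hcc
  simp only [Prod.mk.injEq, true_and]
  exact ZMod.val_injective k (by omega)

end NormalForm

namespace GG

variable {n m : ℕ} {α β γ : ℤ}

theorem gX_pow : gX n m α β γ ^ n = gZ n m α β γ ^ α := by
  have := PresentedGroup.mk_eq_mk_of_mul_inv_mem (rels := grels n m α β γ)
    (x := FreeGroup.of 0 ^ n) (y := FreeGroup.of 2 ^ α) (by simp [grels])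
  rwa [map_pow, map_zpow] at this

theorem gY_sq : gY n m α β γ ^ 2 = gZ n m α β γ ^ β := by
  have := PresentedGroup.mk_eq_mk_of_mul_inv_mem (rels := grels n m α β γ)
    (x := FreeGroup.of 1 ^ 2) (y := FreeGroup.of 2 ^ β) (by simp [grels])
  rwa [map_pow, map_zpow] at this

theorem gY_mul_gX :
    gY n m α β γ * gX n m α β γ = gX n m α β γ ^ (n - 1) * gY n m α β γ * gZ n m α β γ ^ γ := by
  have := PresentedGroup.mk_eq_mk_of_mul_inv_mem (rels := grels n m α β γ)
    (x := FreeGroup.of 1 * FreeGroup.of 0)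
    (y := FreeGroup.of 0 ^ (n - 1) * FreeGroup.of 1 * FreeGroup.of 2 ^ γ) (by simp [grels])
  rwa [map_mul, map_mul, map_mul, map_pow, map_zpow] at this

theorem gZ_pow : gZ n m α β γ ^ m = 1 := by
  have := PresentedGroup.one_of_mem (rels := grels n m α β γ) (x := FreeGroup.of 2 ^ m)
    (by simp [grels])
  rwa [map_pow] at this

section Abelian

variable {P : Type*} [CommGroup P] (f : GG n m α β γ →* P)

theorem map_gX_sq (hn : n ≠ 0) : f (gX n m α β γ) ^ 2 = f (gZ n m α β γ) ^ (α + γ) := by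
  set x := f (gX n m α β γ)
  set z := f (gZ n m α β γ)
  have hx : x = x ^ (n - 1) * z ^ γ := by
    have h := congrArg f gY_mul_gX
    rw [map_mul, map_mul, map_mul, map_pow, map_zpow, mul_right_comm _ (f _)] at h
    exact mul_left_cancel (h.trans (mul_comm _ _))
  calc x ^ 2 = x * (x ^ (n - 1) * z ^ γ) := by rw [sq, ← hx]
    _ = x ^ n * z ^ γ := by rw [← mul_assoc, ← pow_succ', Nat.sub_add_cancel (by omega)]
    _ = z ^ (α + γ) := by rw [← map_pow, gX_pow, map_zpow, zpow_add]

theorem map_gZ_pow_eq_one {n₂ m₂ : ℕ} (hn : n = 2 * n₂) (hn0 : n ≠ 0)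
    (hreal : (n₂ : ℤ) * (α + γ) ≡ α + m₂ [ZMOD m]) : f (gZ n m α β γ) ^ m₂ = 1 := by
  set z := f (gZ n m α β γ)
  have hzm : (orderOf z : ℤ) ∣ m := Int.natCast_dvd_natCast.2
    (orderOf_dvd_of_pow_eq_one (by rw [← map_pow, gZ_pow, map_one]))
  have h : z ^ α * z ^ (m₂ : ℤ) = z ^ α :=
    calc z ^ α * z ^ (m₂ : ℤ) = z ^ ((n₂ : ℤ) * (α + γ)) := by
          rw [← zpow_add]; exact zpow_eq_zpow_iff_modEq.2 (hreal.of_dvd hzm).symm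
      _ = f (gX n m α β γ) ^ n := by
          rw [mul_comm, zpow_mul, ← map_gX_sq f hn0, zpow_natCast, ← pow_mul, ← hn]
      _ = z ^ α := by rw [← map_pow, gX_pow, map_zpow]
  rwa [mul_eq_left, zpow_natCast] at h

end Abelian

theorem lift_eq_one_of_mem_grels_s11 {P : Type*} [Group P] {a b c : P} (h1 : a ^ n = c ^ α)
    (h2 : b ^ 2 = c ^ β) (h3 : b * a = a ^ (n - 1) * b * c ^ γ) (h4 : b * c = c * b)
    (h5 : a * c = c * a) (h6 : c ^ m = 1) :
    ∀ r ∈ grels n m α β γ, FreeGroup.lift ![a, b, c] r = 1 := by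
  simp only [grels, Set.mem_insert_iff, Set.mem_singleton_iff]
  rintro r (rfl | rfl | rfl | rfl | rfl | rfl) <;> simp [h1, h2, h3, h4, h5, h6]

open Multiplicative in
theorem exists_hom_to_zmod_prod (hn : Even n) (hn0 : n ≠ 0)
    (h : (n : ZMod m) * (α + γ) = 2 * α) :
    ∃ φ : GG n m α 0 γ →* Multiplicative (ZMod 2 × ZMod 2 × ZMod m),
      φ (gY n m α 0 γ) = ofAdd (1, 0, 0) ∧
      φ (gX n m α 0 γ) = ofAdd (0, 1, ((α + γ : ℤ) : ZMod m)) ∧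
      φ (gZ n m α 0 γ) = ofAdd (0, 0, 2) := by
  have hrels := lift_eq_one_of_mem_grels_s11 (n := n) (m := m) (α := α) (β := 0) (γ := γ)
    (a := ofAdd ((0, 1, ((α + γ : ℤ) : ZMod m)) : ZMod 2 × ZMod 2 × ZMod m))
    (b := ofAdd (1, 0, 0)) (c := ofAdd (0, 0, 2)) ?_ ?_ ?_ (mul_comm _ _) (mul_comm _ _) ?_
  · exact ⟨PresentedGroup.toGroup hrels, PresentedGroup.toGroup.of hrels,
      PresentedGroup.toGroup.of hrels, PresentedGroup.toGroup.of hrels⟩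
  all_goals apply toAdd.injective
  all_goals simp only [Int.cast_add, toAdd_mul, toAdd_pow, toAdd_zpow, toAdd_ofAdd, toAdd_one,
    Prod.mk_add_mk, Prod.smul_mk, nsmul_eq_mul, smul_add, smul_zero, zsmul_eq_mul, mul_one,
    zero_mul, add_zero, zero_add, zpow_ofNat, pow_zero, CharP.cast_eq_zero, Prod.ext_iff,
    Prod.fst_zero, Prod.snd_zero, and_self, true_and]
  · exact ⟨hn.natCast_zmod_two, by linear_combination h⟩
  · have hodd : Odd (n - 1) := Nat.Even.sub_odd (by omega) hn odd_one
    refine ⟨hodd.natCast_zmod_two.symm, ?_⟩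
    push_cast [Nat.cast_sub (Nat.one_le_iff_ne_zero.2 hn0)]
    linear_combination -h

theorem closure_abelianization_generators :
    Subgroup.closure {Abelianization.of (gY n m α β γ), Abelianization.of (gX n m α β γ),
      Abelianization.of (gZ n m α β γ)} = ⊤ := by
  have h : ({Abelianization.of (gY n m α β γ), Abelianization.of (gX n m α β γ),
      Abelianization.of (gZ n m α β γ)} : Set _) =
      Abelianization.of '' Set.range PresentedGroup.of := by
    rw [← Set.range_comp]
    ext g
    simp only [Set.mem_insert_iff, Set.mem_singleton_iff, Set.mem_range, Fin.exists_fin_succ,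
      Function.comp_apply, Fin.succ_zero_eq_one, Fin.succ_one_eq_two, IsEmpty.exists_iff, or_false,
      gX, gY, gZ, eq_comm]
    tauto
  rw [h, ← MonoidHom.map_closure, PresentedGroup.closure_range_of, ← MonoidHom.range_eq_map,
    MonoidHom.range_eq_top]
  exact fun a => QuotientGroup.induction_on a fun g => ⟨g, rfl⟩

end GG

/-- For `n = 2n₂`, `m = 2m₂` even saying `(n/2)(α+γ) ≡ α + m/2 (mod m)`, the
abelianization of `G(α, 0, γ)` has order `2m`. -/
theorem stmt11 (n₂ m₂ : ℕ) (n m : ℕ) (hn : n = 2 * n₂) (hm : m = 2 * m₂)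
    (hn3 : 3 ≤ n) (hm1 : 1 ≤ m) (α γ : ℤ)
    (hreal : (n₂ : ℤ) * (α + γ) ≡ α + (m₂ : ℤ) [ZMOD (m : ℤ)]) :
    Nat.card (Abelianization (GG n m α 0 γ)) = 2 * m := by
  have : NeZero m₂ := ⟨by omega⟩
  have hn0 : n ≠ 0 := by omega
  have hcong : (n : ZMod m) * (α + γ) = 2 * α := by
    obtain ⟨k, hk⟩ := hreal.dvd
    have h : ((n * (α + γ) - 2 * α : ℤ) : ZMod m) = 0 :=
      (ZMod.intCast_zmod_eq_zero_iff_dvd _ _).2 ⟨1 - 2 * k, by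
        subst hn hm; push_cast at hk ⊢; linear_combination (-2) * hk⟩
    push_cast at h
    exact sub_eq_zero.1 h
  obtain ⟨φ, hφy, hφx, hφz⟩ := GG.exists_hom_to_zmod_prod ⟨n₂, by omega⟩ hn0 hcong
  subst hm
  let f := Abelianization.of (G := GG n (2 * m₂) α 0 γ)
  have hbij : Function.Bijective (normalForm (f (gY ..)) (f (gX ..)) (f (gZ ..)) m₂) :=
    ⟨normalForm_injective (s := α + γ) (Abelianization.lift φ)
        ((Abelianization.lift_apply_of _ _).trans hφy)
        ((Abelianization.lift_apply_of _ _).trans hφx)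
        ((Abelianization.lift_apply_of _ _).trans hφz),
      normalForm_surjective GG.closure_abelianization_generators
        (by rw [← map_pow, GG.gY_sq, zpow_zero, map_one]) (GG.map_gX_sq f hn0)
        (GG.map_gZ_pow_eq_one f hn hn0 hreal)⟩
  rw [← Nat.card_eq_of_bijective _ hbij]
  simp
end

section
/- With D_{2n} acting on F_p² via θ_ℓ as above, if (x, y) ∈ F_p^× × F_p^× and y/x lies in the cyclic subgroup ⟨ω^ℓ⟩ of F_p^×, then the orbit of (x,y) has exactly k elements and equals {(ω^{jℓ}x, ω^{-jℓ}y) : 0 ≤ j < k}, where k = n/gcd(n, ℓ) is the order of ω^ℓ. -/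
/-- The action of the dihedral group `D_{2n}` on `𝔽_p × 𝔽_p` through the
representation `θ_ℓ` (`r^j ↦ diag(ω^{jℓ}, ω^{-jℓ})`, reflections swap the
coordinates up to such a diagonal matrix). -/
def dact {p n : ℕ} (ω : (ZMod p)ˣ) (ℓ : ℕ) :
    DihedralGroup n → ZMod p × ZMod p → ZMod p × ZMod p
  | DihedralGroup.r j, v =>
      (((ω ^ (ℓ * j.val) : (ZMod p)ˣ) : ZMod p) * v.1,
       ((ω⁻¹ ^ (ℓ * j.val) : (ZMod p)ˣ) : ZMod p) * v.2)
  | DihedralGroup.sr j, v =>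
      (((ω ^ (ℓ * j.val) : (ZMod p)ˣ) : ZMod p) * v.2,
       ((ω⁻¹ ^ (ℓ * j.val) : (ZMod p)ˣ) : ZMod p) * v.1)

/-- If `x, y ≠ 0` and `y/x ∈ ⟨ω^ℓ⟩`, then the orbit of `(x, y)` under `D_{2n}` acting
via `θ_ℓ` is `{(ω^{jℓ} x, ω^{-jℓ} y) : 0 ≤ j < k}` and it has exactly `k` elements,
where `k = n / gcd(n, ℓ)`. -/
theorem stmt14 (p : ℕ) [Fact p.Prime] (hp : Odd p) (n : ℕ) (hn : Even n) (hn3 : 3 ≤ n)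
    (ω : (ZMod p)ˣ) (hω : orderOf ω = n) (ℓ : ℕ) (hℓ1 : 1 ≤ ℓ) (hℓ2 : ℓ ≤ n / 2 - 1)
    (x y : ZMod p) (hx : x ≠ 0) (hy : y ≠ 0)
    (hquot : ∃ j : ℕ, y = ((ω ^ ℓ : (ZMod p)ˣ) : ZMod p) ^ j * x) :
    {w : ZMod p × ZMod p | ∃ g : DihedralGroup n, dact ω ℓ g (x, y) = w} =
        (fun j : ℕ => (((ω ^ (ℓ * j) : (ZMod p)ˣ) : ZMod p) * x,
          ((ω⁻¹ ^ (ℓ * j) : (ZMod p)ˣ) : ZMod p) * y)) '' Set.Iio (n / Nat.gcd n ℓ) ∧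
      {w : ZMod p × ZMod p | ∃ g : DihedralGroup n, dact ω ℓ g (x, y) = w}.ncard =
        n / Nat.gcd n ℓ := by
  haveI : NeZero n := ⟨by omega⟩
  set u : (ZMod p)ˣ := ω ^ ℓ with hu
  set k : ℕ := n / Nat.gcd n ℓ with hk
  have hku : orderOf u = k := by rw [hu, orderOf_pow, hω]
  have hkpos : 0 < k := hku ▸ orderOf_pos u
  obtain ⟨j0, hj0⟩ := hquot
  have hj0' : y = ((u ^ j0 : (ZMod p)ˣ) : ZMod p) * x := by
    rw [hj0]; push_cast; ring
  -- rewrite the parametrizing function in terms of u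
  have hfun : (fun j : ℕ => (((ω ^ (ℓ * j) : (ZMod p)ˣ) : ZMod p) * x,
          ((ω⁻¹ ^ (ℓ * j) : (ZMod p)ˣ) : ZMod p) * y))
      = fun j : ℕ => (((u ^ j : (ZMod p)ˣ) : ZMod p) * x,
          (((u ^ j)⁻¹ : (ZMod p)ˣ) : ZMod p) * y) := by
    funext j
    simp [hu, pow_mul, inv_pow]
  have hmod : ∀ m : ℕ, u ^ (m % k) = u ^ m := by
    intro m; rw [← hku]; exact pow_mod_orderOf u m
  have hset : {w : ZMod p × ZMod p | ∃ g : DihedralGroup n, dact ω ℓ g (x, y) = w} =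
      (fun j : ℕ => (((ω ^ (ℓ * j) : (ZMod p)ˣ) : ZMod p) * x,
          ((ω⁻¹ ^ (ℓ * j) : (ZMod p)ˣ) : ZMod p) * y)) '' Set.Iio k := by
    rw [hfun]
    ext w
    constructor
    · rintro ⟨g, rfl⟩
      cases g with
      | r j =>
        refine ⟨j.val % k, Nat.mod_lt _ hkpos, ?_⟩
        simp only [dact, hmod]
        rw [hj0']
        simp [hu, pow_mul, inv_pow]
      | sr j =>
        refine ⟨(j.val + j0) % k, Nat.mod_lt _ hkpos, ?_⟩
        simp only [dact, hmod]
        rw [hj0']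
        have h1 : (ω ^ (ℓ * j.val) : (ZMod p)ˣ) = u ^ j.val := by
          rw [hu, pow_mul]
        have h2 : (ω⁻¹ ^ (ℓ * j.val) : (ZMod p)ˣ) = (u ^ j.val)⁻¹ := by
          rw [hu, inv_pow, pow_mul]
        rw [h1, h2]
        have e1 : ((u ^ (j.val + j0) : (ZMod p)ˣ) : ZMod p) * x
            = ((u ^ j.val : (ZMod p)ˣ) : ZMod p)
              * (((u ^ j0 : (ZMod p)ˣ) : ZMod p) * x) := by
          rw [pow_add]; push_cast; ring
        have e2u : (u ^ (j.val + j0))⁻¹ * u ^ j0 = (u ^ j.val)⁻¹ := by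
          rw [pow_add, mul_inv]; group
        have e2 : (((u ^ (j.val + j0))⁻¹ : (ZMod p)ˣ) : ZMod p)
              * (((u ^ j0 : (ZMod p)ˣ) : ZMod p) * x)
            = (((u ^ j.val)⁻¹ : (ZMod p)ˣ) : ZMod p) * x := by
          rw [← mul_assoc, ← Units.val_mul, e2u]
        rw [e1, e2]
    · rintro ⟨m, hm, rfl⟩
      refine ⟨DihedralGroup.r (m : ZMod n), ?_⟩
      have hval : ((m : ZMod n)).val = m % n := ZMod.val_natCast n m
      have hkd : k ∣ n := hku ▸ orderOf_dvd_of_pow_eq_one (by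
        rw [hu, ← pow_mul, mul_comm, pow_mul, ← hω, pow_orderOf_eq_one, one_pow])
      have hmn : u ^ (m % n) = u ^ m := by
        rw [← hmod (m % n), Nat.mod_mod_of_dvd m hkd, hmod]
      have hmn' : (u ^ (m % n))⁻¹ = (u ^ m)⁻¹ := by rw [hmn]
      simp only [dact, hval]
      have h1 : (ω ^ (ℓ * (m % n)) : (ZMod p)ˣ) = u ^ m := by
        rw [hu, pow_mul, hmn]
      have h2 : (ω⁻¹ ^ (ℓ * (m % n)) : (ZMod p)ˣ) = (u ^ m)⁻¹ := by
        rw [inv_pow, hu, pow_mul, hmn]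
      rw [h1, h2]
  refine ⟨hset, ?_⟩
  rw [hset, hfun]
  have hinj : Set.InjOn (fun j : ℕ => (((u ^ j : (ZMod p)ˣ) : ZMod p) * x,
      (((u ^ j)⁻¹ : (ZMod p)ˣ) : ZMod p) * y)) (Set.Iio k) := by
    intro a ha b hb hab
    have h1 : ((u ^ a : (ZMod p)ˣ) : ZMod p) * x = ((u ^ b : (ZMod p)ˣ) : ZMod p) * x :=
      congrArg Prod.fst hab
    have h2 : ((u ^ a : (ZMod p)ˣ) : ZMod p) = ((u ^ b : (ZMod p)ˣ) : ZMod p) :=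
      mul_right_cancel₀ hx h1
    have h3 : u ^ a = u ^ b := Units.ext h2
    have := pow_injOn_Iio_orderOf (x := u)
    rw [hku] at this
    exact this ha hb h3
  rw [Set.ncard_image_of_injOn hinj]
  have : (Set.Iio k : Set ℕ) = ↑(Finset.range k) := by
    ext j; simp [Finset.mem_range]
  rw [this, Set.ncard_coe_finset, Finset.card_range]
end

section
/- The orbits of D_{2n} acting on F_p² via θ_{ℓ₁} coincide with the orbits via θ_{ℓ₂} if and only if gcd(n, ℓ₁) = gcd(n, ℓ₂). -/
/-!
Both rotations and reflections of `D_{2n}` act through the units `ω^{ℓj}`, which run over the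
cyclic subgroup `⟨ω^ℓ⟩`; so the orbit relation of `θ_ℓ` is determined by this subgroup, and it
determines it back through the orbit of `(1, 1)`. By Bézout `⟨ω^ℓ⟩ = ⟨ω^{gcd(n, ℓ)}⟩`, a subgroup
of order `n / gcd(n, ℓ)`, so two such subgroups agree exactly when the gcds do.
-/

open Subgroup

section OrderOf

variable {G : Type*} [Group G]

theorem zpowers_pow_gcd_orderOf (x : G) (k : ℕ) :
    zpowers (x ^ (orderOf x).gcd k) = zpowers (x ^ k) := by
  refine le_antisymm (zpowers_le.mpr ?_) (zpowers_le.mpr ?_)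
  · have bezout : x ^ (orderOf x).gcd k = (x ^ k) ^ (Nat.gcdB (orderOf x) k) := by
      rw [← zpow_natCast, Nat.gcd_eq_gcd_ab, zpow_add, zpow_mul, zpow_natCast, pow_orderOf_eq_one,
        one_zpow, one_mul, zpow_mul, zpow_natCast]
    rw [bezout]
    exact zpow_mem_zpowers _ _
  · obtain ⟨c, hc⟩ := Nat.gcd_dvd_right (orderOf x) k
    have : x ^ k = (x ^ (orderOf x).gcd k) ^ c := by rw [← pow_mul, ← hc]
    rw [this]
    exact npow_mem_zpowers _ _

theorem zpowers_pow_eq_zpowers_pow_iff {x : G} (hx : IsOfFinOrder x) (a b : ℕ) :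
    zpowers (x ^ a) = zpowers (x ^ b) ↔ (orderOf x).gcd a = (orderOf x).gcd b := by
  constructor
  · intro h
    have horder := congrArg (fun H : Subgroup G => Nat.card H) h
    simp only [Nat.card_zpowers, hx.orderOf_pow] at horder
    exact (Nat.div_eq_iff_eq_of_dvd_dvd hx.orderOf_pos.ne' (Nat.gcd_dvd_left _ _)
      (Nat.gcd_dvd_left _ _)).mp horder
  · intro h
    rw [← zpowers_pow_gcd_orderOf x a, h, zpowers_pow_gcd_orderOf]

theorem range_pow_val_eq_zpowers {n : ℕ} [NeZero n] {y : G} (hy : orderOf y ∣ n) :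
    Set.range (fun j : ZMod n => y ^ j.val) = zpowers y := by
  refine Set.Subset.antisymm ?_ fun z hz => ?_
  · rintro _ ⟨j, rfl⟩
    exact npow_mem_zpowers _ _
  · have hfin : IsOfFinOrder y := orderOf_pos_iff.mp (Nat.pos_of_dvd_of_pos hy (NeZero.pos n))
    obtain ⟨m, rfl⟩ := hfin.mem_powers_iff_mem_zpowers.mpr hz
    refine ⟨m, ?_⟩
    show y ^ (m : ZMod n).val = y ^ m
    rw [ZMod.val_natCast, pow_eq_pow_iff_modEq]
    exact (Nat.mod_modEq m n).of_dvd hy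

end OrderOf

section DiagonalSwap

variable {M : Type*} [Monoid M]

def diagAct (u : Mˣ) (v : M × M) : M × M := (u * v.1, ↑u⁻¹ * v.2)

def DiagSwapRel (H : Set Mˣ) (v w : M × M) : Prop :=
  ∃ u ∈ H, diagAct u v = w ∨ diagAct u v.swap = w

theorem subset_of_diagSwapRel_imp {H₁ H₂ : Set Mˣ}
    (h : ∀ v w, DiagSwapRel H₁ v w → DiagSwapRel H₂ v w) : H₁ ⊆ H₂ := by
  intro u hu
  obtain ⟨u', hu', hu'u⟩ := h (1, 1) (diagAct u (1, 1)) ⟨u, hu, .inl rfl⟩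
  have : (u' : M) = u := by
    rcases hu'u with hu'u | hu'u <;> simpa [diagAct] using congrArg Prod.fst hu'u
  rwa [← Units.ext this]

theorem diagSwapRel_iff_eq {H₁ H₂ : Set Mˣ} :
    (∀ v w, DiagSwapRel H₁ v w ↔ DiagSwapRel H₂ v w) ↔ H₁ = H₂ := by
  refine ⟨fun h => ?_, fun h => by simp [h]⟩
  exact (subset_of_diagSwapRel_imp fun v w => (h v w).mp).antisymm
    (subset_of_diagSwapRel_imp fun v w => (h v w).mpr)

end DiagonalSwap

section Dihedral

variable {p n : ℕ} {ω : (ZMod p)ˣ} {ℓ : ℕ}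

theorem dact_r (j : ZMod n) (v : ZMod p × ZMod p) :
    dact ω ℓ (DihedralGroup.r j) v = diagAct ((ω ^ ℓ) ^ j.val) v := by
  simp [dact, diagAct, pow_mul, inv_pow]

theorem dact_sr (j : ZMod n) (v : ZMod p × ZMod p) :
    dact ω ℓ (DihedralGroup.sr j) v = diagAct ((ω ^ ℓ) ^ j.val) v.swap := by
  simp [dact, diagAct, pow_mul, inv_pow]

theorem exists_dact_eq_iff [NeZero n] (hω : orderOf ω = n) (v w : ZMod p × ZMod p) :
    (∃ g : DihedralGroup n, dact ω ℓ g v = w) ↔ DiagSwapRel (zpowers (ω ^ ℓ) : Set _) v w := by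
  rw [DiagSwapRel, ← range_pow_val_eq_zpowers (hω ▸ orderOf_pow_dvd ℓ)]
  constructor
  · rintro ⟨g | g, rfl⟩
    · exact ⟨_, ⟨g, rfl⟩, .inl (dact_r g v).symm⟩
    · exact ⟨_, ⟨g, rfl⟩, .inr (dact_sr g v).symm⟩
  · rintro ⟨_, ⟨j, rfl⟩, h | h⟩
    · exact ⟨.r j, (dact_r j v).trans h⟩
    · exact ⟨.sr j, (dact_sr j v).trans h⟩

end Dihedral

theorem stmt15_general (p : ℕ) (n : ℕ) (hn3 : 3 ≤ n)
    (ω : (ZMod p)ˣ) (hω : orderOf ω = n)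
    (ℓ₁ ℓ₂ : ℕ) :
    (∀ v w : ZMod p × ZMod p,
        (∃ g : DihedralGroup n, dact ω ℓ₁ g v = w) ↔
        (∃ g : DihedralGroup n, dact ω ℓ₂ g v = w)) ↔
      Nat.gcd n ℓ₁ = Nat.gcd n ℓ₂ := by
  have hn0 : 0 < n := by omega
  have : NeZero n := ⟨hn0.ne'⟩
  have hfin : IsOfFinOrder ω := orderOf_pos_iff.mp (hω ▸ hn0)
  simp only [exists_dact_eq_iff hω]
  rw [diagSwapRel_iff_eq, SetLike.coe_set_eq, zpowers_pow_eq_zpowers_pow_iff hfin, hω]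

/-- The orbits of `D_{2n}` on `𝔽_p²` via `θ_{ℓ₁}` coincide with those via `θ_{ℓ₂}`
if and only if `gcd(n, ℓ₁) = gcd(n, ℓ₂)`. -/
theorem stmt15 (p : ℕ) [Fact p.Prime] (hp : Odd p) (n : ℕ) (hn : Even n) (hn3 : 3 ≤ n)
    (ω : (ZMod p)ˣ) (hω : orderOf ω = n)
    (ℓ₁ ℓ₂ : ℕ) (hℓ₁ : 1 ≤ ℓ₁ ∧ ℓ₁ ≤ n / 2 - 1) (hℓ₂ : 1 ≤ ℓ₂ ∧ ℓ₂ ≤ n / 2 - 1) :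
    (∀ v w : ZMod p × ZMod p,
        (∃ g : DihedralGroup n, dact ω ℓ₁ g v = w) ↔
        (∃ g : DihedralGroup n, dact ω ℓ₂ g v = w)) ↔
      Nat.gcd n ℓ₁ = Nat.gcd n ℓ₂ :=
  stmt15_general p n hn3 ω hω ℓ₁ ℓ₂
end

section
/- Let p be an odd prime, F_p the field with p elements, n, m even with nm | p-1 in the appropriate sense, and let w generate F_p^×. Suppose a, i, t, r are integers with w^{an} = w^{tα}, w^{2r} = 1, and w^{2a+i} = w^{t(α+γ)}, where w^i has order n and w^t has order m. Then the assignment X ↦ diag(w^{aℓ}, w^{aℓ+iℓ}), Y ↦ skew-diagonal with entries w^r, Z ↦ w^{tℓ}·Id defines a group homomorphism ρ_ℓ from G = ⟨X, Y, Z | X^n = Z^α, Y² = 1, YX = X^{n-1}YZ^γ, YZ = ZY, XZ = ZX, Z^m = 1⟩ to GL_2(F_p). -/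
open Matrix

namespace Stmt16Aux

variable {p : ℕ} [Fact p.Prime]

def dU (u v : (ZMod p)ˣ) : (Matrix (Fin 2) (Fin 2) (ZMod p))ˣ where
  val := !![(u : ZMod p), 0; 0, (v : ZMod p)]
  inv := !![((u⁻¹ : (ZMod p)ˣ) : ZMod p), 0; 0, ((v⁻¹ : (ZMod p)ˣ) : ZMod p)]
  val_inv := by
    simp only [Matrix.mul_fin_two, Matrix.one_fin_two, mul_zero, zero_mul, add_zero, zero_add,
      Units.mul_inv]
  inv_val := by
    simp only [Matrix.mul_fin_two, Matrix.one_fin_two, mul_zero, zero_mul, add_zero, zero_add,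
      Units.inv_mul]

def aU (s : (ZMod p)ˣ) : (Matrix (Fin 2) (Fin 2) (ZMod p))ˣ where
  val := !![0, (s : ZMod p); (s : ZMod p), 0]
  inv := !![0, ((s⁻¹ : (ZMod p)ˣ) : ZMod p); ((s⁻¹ : (ZMod p)ˣ) : ZMod p), 0]
  val_inv := by
    simp only [Matrix.mul_fin_two, Matrix.one_fin_two, mul_zero, zero_mul, add_zero, zero_add,
      Units.mul_inv]
  inv_val := by
    simp only [Matrix.mul_fin_two, Matrix.one_fin_two, mul_zero, zero_mul, add_zero, zero_add,
      Units.inv_mul]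

lemma dU_mul (u v u' v' : (ZMod p)ˣ) : dU u v * dU u' v' = dU (u * u') (v * v') :=
  Units.ext (by
    simp only [dU, Units.val_mul, Matrix.mul_fin_two, mul_zero, zero_mul, add_zero, zero_add,
      Units.val_mul])

lemma dU_one : dU (1 : (ZMod p)ˣ) 1 = 1 :=
  Units.ext (by simp only [dU, Units.val_one, Matrix.one_fin_two])

lemma dU_inv (u v : (ZMod p)ˣ) : (dU u v)⁻¹ = dU u⁻¹ v⁻¹ := Units.ext rfl

lemma dU_pow (u v : (ZMod p)ˣ) (k : ℕ) : dU u v ^ k = dU (u ^ k) (v ^ k) := by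
  induction k with
  | zero => simp only [pow_zero, dU_one]
  | succ k ih => rw [pow_succ, pow_succ, pow_succ, ih, dU_mul]

lemma dU_zpow (u v : (ZMod p)ˣ) (k : ℤ) : dU u v ^ k = dU (u ^ k) (v ^ k) := by
  cases k with
  | ofNat k => simpa using dU_pow u v k
  | negSucc k => rw [zpow_negSucc, zpow_negSucc, zpow_negSucc, dU_pow, dU_inv]

lemma aU_mul_dU (s u v : (ZMod p)ˣ) : aU s * dU u v = dU v u * aU s :=
  Units.ext (by
    simp only [aU, dU, Units.val_mul, Matrix.mul_fin_two, mul_zero, zero_mul, add_zero, zero_add]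
    rw [mul_comm ((v : ZMod p)) (s : ZMod p), mul_comm ((u : ZMod p)) (s : ZMod p)])

lemma aU_mul_aU (s : (ZMod p)ˣ) : aU s * aU s = dU (s * s) (s * s) :=
  Units.ext (by
    simp only [aU, dU, Units.val_mul, Matrix.mul_fin_two, mul_zero, zero_mul, add_zero, zero_add,
      Units.val_mul])

end Stmt16Aux

open Stmt16Aux in
/-- Given `w` generating `𝔽_p^×` and integers `a, i, t, r` with `w^{an} = w^{tα}`,
`w^{2r} = 1`, `w^{2a+i} = w^{t(α+γ)}`, `w^i` of order `n`, `w^t` of order `m`, the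
assignment `X ↦ diag(w^{aℓ}, w^{aℓ+iℓ})`, `Y ↦ antidiag(w^r, w^r)`, `Z ↦ w^{tℓ}·I`
defines a homomorphism `ρ_ℓ : G(α,0,γ) → GL₂(𝔽_p)`. -/
theorem stmt16 (p : ℕ) [Fact p.Prime] (hp : Odd p) (n m : ℕ) (hn : Even n)
    (hm : Even m) (hn3 : 3 ≤ n) (hm1 : 1 ≤ m) (α γ : ℤ)
    (w : (ZMod p)ˣ) (hw : ∀ u : (ZMod p)ˣ, u ∈ Subgroup.zpowers w)
    (a i t r : ℤ)
    (h1 : w ^ (a * n) = w ^ (t * α))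
    (h2 : w ^ (2 * r) = 1)
    (h3 : w ^ (2 * a + i) = w ^ (t * (α + γ)))
    (hi : orderOf (w ^ i) = n) (ht : orderOf (w ^ t) = m)
    (ℓ : ℤ) :
    ∃ ρ : GG n m α 0 γ →* GL (Fin 2) (ZMod p),
      (ρ (gX n m α 0 γ) : Matrix (Fin 2) (Fin 2) (ZMod p)) =
        !![((w ^ (a * ℓ) : (ZMod p)ˣ) : ZMod p), 0;
           0, ((w ^ (a * ℓ + i * ℓ) : (ZMod p)ˣ) : ZMod p)] ∧
      (ρ (gY n m α 0 γ) : Matrix (Fin 2) (Fin 2) (ZMod p)) =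
        !![0, ((w ^ r : (ZMod p)ˣ) : ZMod p); ((w ^ r : (ZMod p)ˣ) : ZMod p), 0] ∧
      (ρ (gZ n m α 0 γ) : Matrix (Fin 2) (Fin 2) (ZMod p)) =
        !![((w ^ (t * ℓ) : (ZMod p)ˣ) : ZMod p), 0;
           0, ((w ^ (t * ℓ) : (ZMod p)ˣ) : ZMod p)] := by
  set u : (ZMod p)ˣ := w ^ (a * ℓ) with hu_def
  set v : (ZMod p)ˣ := w ^ (a * ℓ + i * ℓ) with hv_def
  set s : (ZMod p)ˣ := w ^ r with hs_def
  set z : (ZMod p)ˣ := w ^ (t * ℓ) with hz_def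
  have key : ∀ x y : ℤ, w ^ x = w ^ y → w ^ (x * ℓ) = w ^ (y * ℓ) := fun x y h => by
    rw [_root_.zpow_mul, _root_.zpow_mul, h]
  have hinat : (w ^ i) ^ n = 1 := by rw [← hi]; exact pow_orderOf_eq_one _
  have htnat : (w ^ t) ^ m = 1 := by rw [← ht]; exact pow_orderOf_eq_one _
  have hw_an : w ^ (a * (n : ℤ) * ℓ) = w ^ (t * α * ℓ) := key _ _ (by exact_mod_cast h1)
  have hw_2ai : w ^ ((2 * a + i) * ℓ) = w ^ (t * (α + γ) * ℓ) := key _ _ h3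
  have hiz : w ^ (i * (n : ℤ)) = 1 := by
    rw [_root_.zpow_mul, _root_.zpow_natCast]; exact hinat
  have wzα : w ^ (a * (n : ℤ) * ℓ) = z ^ α := by
    rw [hw_an, hz_def, ← _root_.zpow_mul, show t * ℓ * α = t * α * ℓ by ring]
  have hun : u ^ n = z ^ α := by
    rw [hu_def, ← _root_.zpow_natCast, ← _root_.zpow_mul, show a * ℓ * (n : ℤ) = a * (n : ℤ) * ℓ by ring, wzα]
  have hvn : v ^ n = z ^ α := by
    rw [hv_def, ← _root_.zpow_natCast, ← _root_.zpow_mul,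
      show (a * ℓ + i * ℓ) * (n : ℤ) = i * (n : ℤ) * ℓ + a * (n : ℤ) * ℓ by ring, _root_.zpow_add,
      _root_.zpow_mul w (i * (n : ℤ)) ℓ, hiz, _root_.one_zpow, one_mul, wzα]
  have hss : s * s = 1 := by
    rw [hs_def, ← _root_.zpow_add, show r + r = 2 * r by ring, h2]
  have hzm : z ^ m = 1 := by
    rw [hz_def, ← _root_.zpow_natCast, ← _root_.zpow_mul, show t * ℓ * (m : ℤ) = t * (m : ℤ) * ℓ by ring,
      _root_.zpow_mul w (t * (m : ℤ)) ℓ, _root_.zpow_mul w t (m : ℤ), _root_.zpow_natCast, htnat, _root_.one_zpow]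
  have huv : u * v = z ^ α * z ^ γ := by
    rw [hu_def, hv_def, ← _root_.zpow_add, show a * ℓ + (a * ℓ + i * ℓ) = (2 * a + i) * ℓ by ring,
      hw_2ai, show t * (α + γ) * ℓ = t * ℓ * α + t * ℓ * γ by ring, _root_.zpow_add, hz_def,
      ← _root_.zpow_mul, ← _root_.zpow_mul]
  have hn1 : n - 1 + 1 = n := by omega
  have hpow : ∀ x : (ZMod p)ˣ, x ^ (n - 1) * x = x ^ n := fun x => by rw [← _root_.pow_succ, hn1]
  have hv2 : v = u ^ (n - 1) * z ^ γ := by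
    have h : u * v = u * (u ^ (n - 1) * z ^ γ) := by
      rw [huv, ← hun, ← hpow u, _root_.mul_comm (u ^ (n - 1)) u, _root_.mul_assoc]
    exact mul_left_cancel h
  have hu2 : u = v ^ (n - 1) * z ^ γ := by
    have h : v * u = v * (v ^ (n - 1) * z ^ γ) := by
      rw [_root_.mul_comm v u, huv, ← hvn, ← hpow v, _root_.mul_comm (v ^ (n - 1)) v, _root_.mul_assoc]
    exact mul_left_cancel h
  -- the images of the generators
  set X : GL (Fin 2) (ZMod p) := dU u v with hX_def
  set Y : GL (Fin 2) (ZMod p) := aU s with hY_def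
  set Z : GL (Fin 2) (ZMod p) := dU z z with hZ_def
  have hrels : ∀ rel ∈ grels n m α 0 γ,
      FreeGroup.lift (![X, Y, Z] : Fin 3 → GL (Fin 2) (ZMod p)) rel = 1 := by
    intro rel hrel
    simp only [grels, Set.mem_insert_iff, Set.mem_singleton_iff] at hrel
    rcases hrel with h | h | h | h | h | h <;> subst h <;>
      simp only [_root_.map_mul, _root_.map_inv, _root_.map_pow, _root_.map_zpow, FreeGroup.lift_apply_of,
        Matrix.cons_val_zero, Matrix.cons_val_one, Matrix.head_cons,
        Matrix.cons_val_two, Matrix.tail_cons]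
    · rw [_root_.mul_inv_eq_one, hX_def, hZ_def, dU_pow, dU_zpow, hun, hvn]
    · rw [_root_.mul_inv_eq_one, _root_.zpow_zero, hY_def, _root_.pow_two, aU_mul_aU, hss, dU_one]
    · rw [_root_.mul_inv_eq_one]
      calc Y * X = dU v u * aU s := by rw [hX_def, hY_def, aU_mul_dU]
        _ = dU (u ^ (n - 1) * z ^ γ) (v ^ (n - 1) * z ^ γ) * aU s := by
            congr 1
            rw [← hv2, ← hu2]
        _ = dU (u ^ (n - 1)) (v ^ (n - 1)) * aU s * dU (z ^ γ) (z ^ γ) := by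
            rw [_root_.mul_assoc, aU_mul_dU, ← _root_.mul_assoc, dU_mul]
        _ = X ^ (n - 1) * Y * Z ^ γ := by rw [hX_def, hY_def, hZ_def, dU_pow, dU_zpow]
    · rw [_root_.mul_inv_eq_one, hY_def, hZ_def, aU_mul_dU]
    · rw [_root_.mul_inv_eq_one, hX_def, hZ_def, dU_mul, dU_mul, _root_.mul_comm u z, _root_.mul_comm v z]
    · rw [hZ_def, dU_pow, hzm, dU_one]
  refine ⟨PresentedGroup.toGroup hrels, ?_, ?_, ?_⟩
  · have e : PresentedGroup.toGroup hrels (gX n m α 0 γ) = X :=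
      PresentedGroup.toGroup.of hrels
    rw [e]
    rfl
  · have e : PresentedGroup.toGroup hrels (gY n m α 0 γ) = Y :=
      PresentedGroup.toGroup.of hrels
    rw [e]
    rfl
  · have e : PresentedGroup.toGroup hrels (gZ n m α 0 γ) = Z :=
      PresentedGroup.toGroup.of hrels
    rw [e]
    rfl
end
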